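/- For any nonzero real number a, the sum over nonzero integers n of Δ̂(an)² is strictly less than 1/|a|, where Δ̂(x) = 1 for x = 0 and Δ̂(x) = sin²(πx)/(π²x²) for x ≠ 0. -/

import Mathlib

/-!
Since `0 ≤ Δ̂ ≤ 1` we have `Δ̂² ≤ Δ̂`, and the sum of `Δ̂(an) = sin²(πan) / (π²a²n²)` over `n ≠ 0`
can be evaluated exactly: writing `sin² = (1 - cos 2·)/2`, the Fourier series of the Bernoulli
polynomial `B₂` gives `∑_{n ≥ 1} sin²(πxn)/n² = π² x (1 - x)/2` on `[0, 1]`, and since only the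
fractional part `{a}` of `a` matters, `∑_{n ≠ 0} Δ̂(an) = {a}(1 - {a}) / a²`.
Finally `{a}(1 - {a}) < |a|`: it is below both `{a}` and `1 - {a}`, one of which is at most `|a|`.
-/

open Real

/-- Fourier transform of the tent function `max (1 - |x|) 0`. -/
noncomputable def tentHat (x : ℝ) : ℝ :=
  if x = 0 then 1 else (Real.sin (π * x)) ^ 2 / (π ^ 2 * x ^ 2)

theorem sin_sq_add_int_mul_pi (x : ℝ) (k : ℤ) : sin (x + k * π) ^ 2 = sin x ^ 2 := by
  rw [sin_add_int_mul_pi, mul_pow, ← zpow_natCast, ← zpow_mul,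
    Even.neg_one_zpow ⟨k, by push_cast; ring⟩, one_mul]

theorem sin_sq_pi_mul_fract_mul_int (x : ℝ) (n : ℤ) :
    sin (π * Int.fract x * n) ^ 2 = sin (π * x * n) ^ 2 := by
  rw [← sin_sq_add_int_mul_pi _ (⌊x⌋ * n), ← Int.self_sub_floor]
  push_cast
  ring_nf

theorem eval_map_bernoulli_two (x : ℝ) :
    ((Polynomial.bernoulli 2).map (algebraMap ℚ ℝ)).eval x = x ^ 2 - x + 1 / 6 := by
  simp [Polynomial.bernoulli_def, Finset.sum_range_succ, _root_.bernoulli, sub_eq_add_neg,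
    add_comm, add_left_comm]

theorem hasSum_sin_sq_div_sq_of_mem_Icc {x : ℝ} (hx : x ∈ Set.Icc (0 : ℝ) 1) :
    HasSum (fun n : ℕ => sin (π * x * n) ^ 2 / (n : ℝ) ^ 2) (π ^ 2 * x * (1 - x) / 2) := by
  have hcos : HasSum (fun n : ℕ => 1 / (n : ℝ) ^ 2 * cos (2 * π * n * x))
      (π ^ 2 * (x ^ 2 - x + 1 / 6)) := by
    convert hasSum_one_div_nat_pow_mul_cos one_ne_zero hx using 1
    · simp only [mul_one]
    · rw [mul_one, eval_map_bernoulli_two, Nat.factorial_two]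
      ring
  have h := (hasSum_zeta_two.sub hcos).div_const 2
  rw [show (π ^ 2 / 6 - π ^ 2 * (x ^ 2 - x + 1 / 6)) / 2 = π ^ 2 * x * (1 - x) / 2 by ring] at h
  refine h.congr_fun fun n => ?_
  rw [show 2 * π * n * x = 2 * (π * x * n) by ring, sin_sq_eq_half_sub]
  ring

theorem hasSum_sin_sq_div_sq (x : ℝ) :
    HasSum (fun n : ℕ => sin (π * x * n) ^ 2 / (n : ℝ) ^ 2)
      (π ^ 2 * Int.fract x * (1 - Int.fract x) / 2) :=
  (hasSum_sin_sq_div_sq_of_mem_Icc ⟨Int.fract_nonneg x, (Int.fract_lt_one x).le⟩).congr_fun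
    fun n => by rw [← Int.cast_natCast n, sin_sq_pi_mul_fract_mul_int]

theorem hasSum_int_sin_sq_div_sq (x : ℝ) :
    HasSum (fun n : ℤ => sin (π * x * n) ^ 2 / (n : ℝ) ^ 2)
      (π ^ 2 * Int.fract x * (1 - Int.fract x)) := by
  have hsum := hasSum_sin_sq_div_sq x
  -- the `n = 0` term is `0 / 0 = 0`
  have h := HasSum.of_nat_of_neg (f := fun n : ℤ => sin (π * x * n) ^ 2 / (n : ℝ) ^ 2)
    (hsum.congr_fun fun n => by simp only [Int.cast_natCast])
    (hsum.congr_fun fun n => by simp only [Int.cast_neg, Int.cast_natCast, mul_neg, sin_neg, neg_sq])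
  rwa [Int.cast_zero, mul_zero, sin_zero, add_halves, sub_eq_self.2 (by simp)] at h

theorem hasSum_tentHat_mul_int {a : ℝ} (ha : a ≠ 0) :
    HasSum (fun n : {n : ℤ // n ≠ 0} => tentHat (a * n))
      (Int.fract a * (1 - Int.fract a) / a ^ 2) := by
  have hint := (hasSum_int_sin_sq_div_sq a).div_const (π ^ 2 * a ^ 2)
  rw [mul_assoc, mul_div_mul_left _ _ (pow_ne_zero 2 pi_ne_zero)] at hint
  refine ((Subtype.val_injective.hasSum_iff ?_).2 hint).congr_fun fun ⟨n, hn⟩ => ?_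
  · simp
  · rw [tentHat, if_neg (mul_ne_zero ha (Int.cast_ne_zero.2 hn)), ← mul_assoc,
      Function.comp_apply, div_div]
    ring

theorem tentHat_nonneg (x : ℝ) : 0 ≤ tentHat x := by
  unfold tentHat
  split_ifs <;> positivity

theorem tentHat_le_one (x : ℝ) : tentHat x ≤ 1 := by
  unfold tentHat
  split_ifs with hx
  · rfl
  · rw [div_le_one (by positivity), ← mul_pow]
    exact sin_sq_le_sq

theorem fract_mul_one_sub_fract_lt_abs {x : ℝ} (hx : x ≠ 0) :
    Int.fract x * (1 - Int.fract x) < |x| := by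
  have hf1 := Int.fract_lt_one x
  rcases (Int.fract_nonneg x).eq_or_lt with hf0 | hf0
  · rw [← hf0, zero_mul]
    exact abs_pos.2 hx
  rcases hx.lt_or_gt with hneg | hpos
  · have hfloor : (⌊x⌋ : ℝ) ≤ -1 := by exact_mod_cast Int.floor_le_neg_one_iff.2 hneg
    have hle : 1 - Int.fract x ≤ |x| := by
      rw [abs_of_neg hneg, ← Int.self_sub_floor]
      linarith
    nlinarith
  · have hfloor : (0 : ℝ) ≤ ⌊x⌋ := by exact_mod_cast Int.floor_nonneg.2 hpos.le
    have hle : Int.fract x ≤ |x| := by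
      rw [abs_of_pos hpos, ← Int.self_sub_floor]
      linarith
    nlinarith

theorem sum_tentHat_sq_lt (a : ℝ) (ha : a ≠ 0) :
    ∑' n : {n : ℤ // n ≠ 0}, (tentHat (a * ((n : ℤ) : ℝ))) ^ 2 < 1 / |a| := by
  have hsum := hasSum_tentHat_mul_int ha
  have hsq_le : ∀ n : {n : ℤ // n ≠ 0}, tentHat (a * n) ^ 2 ≤ tentHat (a * n) := fun n =>
    pow_le_of_le_one (tentHat_nonneg _) (tentHat_le_one _) two_ne_zero
  calc ∑' n : {n : ℤ // n ≠ 0}, tentHat (a * n) ^ 2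
      ≤ ∑' n : {n : ℤ // n ≠ 0}, tentHat (a * n) :=
        (hsum.summable.of_nonneg_of_le (fun _ => sq_nonneg _) hsq_le).tsum_le_tsum hsq_le
          hsum.summable
    _ = Int.fract a * (1 - Int.fract a) / |a| ^ 2 := by rw [hsum.tsum_eq, sq_abs]
    _ < |a| / |a| ^ 2 := by gcongr; exact fract_mul_one_sub_fract_lt_abs ha
    _ = 1 / |a| := by field_simp
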